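/- If 𝒰 ∈ 𝒩ₙ, then ℱ(𝒰) ∈ 𝒩ₙ₊₁; consequently the fixed point ℰ of ℱ (which exists by the Banach fixed-point theorem) satisfies ℰ ∈ 𝒩ₙ for every n, i.e., ℰ maps every ∞-proof of Grz∞+cut to a cut-free ∞-proof of the same sequent. -/

import Mathlib

/-- Modal formulas of the Grzegorczyk logic: ⊥, atoms, →, □. -/
inductive Formula : Type
  | bot : Formula
  | atom : ℕ → Formula
  | imp : Formula → Formula → Formula
  | box : Formula → Formula
deriving DecidableEq

/-- A sequent Γ ⇒ Δ is a pair of finite multisets of formulas. -/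
abbrev Sequent : Type := Multiset Formula × Multiset Formula

/-- Names of the inference rules of Grz∞ + cut (including the two kinds of initial sequents). -/
inductive Rule : Type
  | ax | axBot | impL | impR | refl | box | cut
deriving DecidableEq

/-- □Π for a multiset Π. -/
def boxed (P : Multiset Formula) : Multiset Formula := P.map Formula.box

/-- `Inst r s p₁ p₂` : the rule `r` has a (correct) instance with conclusion `s`,
first premise `p₁` and second premise `p₂` (`none` = no such premise). -/
inductive Inst : Rule → Sequent → Option Sequent → Option Sequent → Prop
  | ax (Γ Δ : Multiset Formula) (p : ℕ) :
      Inst .ax (Formula.atom p ::ₘ Γ, Formula.atom p ::ₘ Δ) none none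
  | axBot (Γ Δ : Multiset Formula) :
      Inst .axBot (Formula.bot ::ₘ Γ, Δ) none none
  | impL (Γ Δ : Multiset Formula) (A B : Formula) :
      Inst .impL (Formula.imp A B ::ₘ Γ, Δ) (some (B ::ₘ Γ, Δ)) (some (Γ, A ::ₘ Δ))
  | impR (Γ Δ : Multiset Formula) (A B : Formula) :
      Inst .impR (Γ, Formula.imp A B ::ₘ Δ) (some (A ::ₘ Γ, B ::ₘ Δ)) none
  | refl (Γ Δ : Multiset Formula) (A : Formula) :
      Inst .refl (Formula.box A ::ₘ Γ, Δ) (some (A ::ₘ Formula.box A ::ₘ Γ, Δ)) none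
  | box (Γ Δ : Multiset Formula) (A : Formula) (P : Multiset Formula) :
      Inst .box (Γ + boxed P, Formula.box A ::ₘ Δ) (some (Γ + boxed P, A ::ₘ Δ))
        (some (boxed P, {A}))
  | cut (Γ Δ : Multiset Formula) (A : Formula) :
      Inst .cut (Γ, Δ) (some (Γ, A ::ₘ Δ)) (some (A ::ₘ Γ, Δ))

/-- A labelling of tree addresses (lists of booleans; `true` = second/right child)
by a rule name together with a sequent; `none` means the address is outside the tree. -/
abbrev Lab : Type := List Bool → Option (Rule × Sequent)

/-- The labelling of the subtree at child `i`. -/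
def shift (i : Bool) (l : Lab) : Lab := fun a => l (i :: a)

/-- An ∞-proof in Grz∞ + cut: a possibly infinite tree of sequents built according to
the rules, in which every infinite branch passes through the right premise of the
rule (□) infinitely many times. -/
structure InfProof : Type where
  lab : Lab
  root_some : (lab []).isSome
  nojunk : ∀ (a : List Bool) (i : Bool), lab a = none → lab (a ++ [i]) = none
  step : ∀ (a : List Bool) (r : Rule) (s : Sequent), lab a = some (r, s) →
      Inst r s ((lab (a ++ [false])).map Prod.snd) ((lab (a ++ [true])).map Prod.snd)
  branch : ∀ f : ℕ → Bool, (∀ n : ℕ, (lab ((List.range n).map f)).isSome) →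
      ∀ N : ℕ, ∃ n : ℕ, N ≤ n ∧ f n = true ∧
        (lab ((List.range n).map f)).map Prod.fst = some Rule.box

/-- The sequent at the root of an ∞-proof. -/
def rootSeq (π : InfProof) : Sequent := ((π.lab []).map Prod.snd).getD (0, 0)

/-- `Proves π S` : the ∞-proof `π` is an ∞-proof of the sequent `S`. -/
def Proves (π : InfProof) (S : Sequent) : Prop := ∃ r : Rule, π.lab [] = some (r, S)

/-- An ∞-proof contains no application of the cut rule (i.e. it is a proof of Grz∞). -/
def NoCut (π : InfProof) : Prop := ∀ (a : List Bool) (r : Rule) (s : Sequent),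
  π.lab a = some (r, s) → r ≠ Rule.cut

/-- Membership of an address in the main fragment: no proper passage through a
right premise of (□) strictly below it. -/
def InMain (l : Lab) (a : List Bool) : Prop :=
  (l a).isSome ∧ ∀ (b c : List Bool), a = b ++ true :: c →
    (l b).map Prod.fst = some Rule.box → c = []

/-- The local height |π| : the length of the longest branch in the main fragment. -/
noncomputable def height (l : Lab) : ℕ := sSup {n : ℕ | ∃ a : List Bool, InMain l a ∧ a.length = n}

/-- The relations ∼ₙ on ∞-proofs (presented on labellings), defined inductively:
π ∼₀ τ always; a single-node proof is ∼ₙ-related to itself; proofs ending in the same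
instance of (→L), (cut), (→R), (refl) are ∼ₙ-related when their immediate subproofs are;
proofs ending in the same instance of (□) are ∼ₙ₊₁-related when the left-premise subproofs
are ∼ₙ₊₁-related and the right-premise subproofs are ∼ₙ-related. -/
inductive Sim : ℕ → Lab → Lab → Prop
  | zero (l m : Lab) : Sim 0 l m
  | leaf (n : ℕ) (l : Lab) : height l = 0 → Sim n l l
  | bin (n : ℕ) (l m : Lab) (r : Rule) (s : Sequent) :
      (r = Rule.impL ∨ r = Rule.cut) →
      l [] = some (r, s) → m [] = some (r, s) →
      (l [false]).map Prod.snd = (m [false]).map Prod.snd →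
      (l [true]).map Prod.snd = (m [true]).map Prod.snd →
      Sim n (shift false l) (shift false m) → Sim n (shift true l) (shift true m) →
      Sim n l m
  | un (n : ℕ) (l m : Lab) (r : Rule) (s : Sequent) :
      (r = Rule.impR ∨ r = Rule.refl) →
      l [] = some (r, s) → m [] = some (r, s) →
      (l [false]).map Prod.snd = (m [false]).map Prod.snd →
      Sim n (shift false l) (shift false m) →
      Sim n l m
  | box (n : ℕ) (l m : Lab) (s : Sequent) :
      l [] = some (Rule.box, s) → m [] = some (Rule.box, s) →
      (l [false]).map Prod.snd = (m [false]).map Prod.snd →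
      (l [true]).map Prod.snd = (m [true]).map Prod.snd →
      Sim (n + 1) (shift false l) (shift false m) → Sim n (shift true l) (shift true m) →
      Sim (n + 1) l m

/-- The sets 𝒫ₙ of ∞-proofs (presented on labellings), defined inductively:
𝒫₀ is everything; single-node proofs are in every 𝒫ₙ; (→L), (→R), (refl) preserve
membership in 𝒫ₙ; a proof ending in (□) with left-premise subproof in 𝒫ₙ₊₁ and
right-premise subproof in 𝒫ₙ is in 𝒫ₙ₊₁. -/
inductive MemP : ℕ → Lab → Prop
  | zero (l : Lab) : MemP 0 l
  | leaf (n : ℕ) (l : Lab) : height l = 0 → MemP n l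
  | bin (n : ℕ) (l : Lab) (s : Sequent) :
      l [] = some (Rule.impL, s) →
      MemP n (shift false l) → MemP n (shift true l) → MemP n l
  | un (n : ℕ) (l : Lab) (r : Rule) (s : Sequent) :
      (r = Rule.impR ∨ r = Rule.refl) →
      l [] = some (r, s) → MemP n (shift false l) → MemP n l
  | box (n : ℕ) (l : Lab) (s : Sequent) :
      l [] = some (Rule.box, s) →
      MemP (n + 1) (shift false l) → MemP n (shift true l) → MemP (n + 1) l

/- The metric d(π,τ) = 2^(−sup{n : π ∼ₙ τ}), with 2^(−∞) = 0. -/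
open Classical in
noncomputable def pdist (π τ : InfProof) : ℝ :=
  if ∀ n : ℕ, Sim n π.lab τ.lab then 0
  else (2 : ℝ) ^ (-((sSup {n : ℕ | Sim n π.lab τ.lab} : ℕ) : ℤ))

/-- A mapping on ∞-proofs is nonexpansive if it preserves all relations ∼ₙ. -/
def Nonexpansive (f : InfProof → InfProof) : Prop :=
  ∀ (n : ℕ) (π τ : InfProof), Sim n π.lab τ.lab → Sim n (f π).lab (f τ).lab

/-- A mapping is adequate if it is nonexpansive, maps 𝒫₁ into 𝒫₁,
and does not increase local height. -/
def Adequate (f : InfProof → InfProof) : Prop :=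
  Nonexpansive f ∧ (∀ π : InfProof, MemP 1 π.lab → MemP 1 (f π).lab) ∧
    ∀ π : InfProof, height (f π).lab ≤ height π.lab

/-- The set 𝒫₁ of ∞-proofs whose main fragment is cut-free, as a subtype. -/
abbrev P1 : Type := {π : InfProof // MemP 1 π.lab}

/-- An A-reducing mapping: a nonexpansive map ℛ : 𝒫₁ × 𝒫₁ → 𝒫₁ such that
ℛ(π′,π″) proves Γ ⇒ Δ whenever π′ proves Γ ⇒ Δ, A and π″ proves A, Γ ⇒ Δ. -/
def Reducing (A : Formula) (R : P1 → P1 → P1) : Prop :=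
  (∀ (n : ℕ) (p₁ p₂ q₁ q₂ : P1), Sim n p₁.1.lab q₁.1.lab → Sim n p₂.1.lab q₂.1.lab →
      Sim n (R p₁ p₂).1.lab (R q₁ q₂).1.lab) ∧
  ∀ (p₁ p₂ : P1) (Γ Δ : Multiset Formula),
    Proves p₁.1 (Γ, A ::ₘ Δ) → Proves p₂.1 (A ::ₘ Γ, Δ) → Proves (R p₁ p₂).1 (Γ, Δ)

/-- A mapping is root-preserving if it maps ∞-proofs to ∞-proofs of the same sequent. -/
def RootPres (f : InfProof → InfProof) : Prop :=
  ∀ (π : InfProof) (S : Sequent), Proves π S → Proves (f π) S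

/-- The uniform distance on mappings of ∞-proofs. -/
noncomputable def udist (U V : InfProof → InfProof) : ℝ :=
  ⨆ π : InfProof, pdist (U π) (V π)

/- The immediate subproof of `π` at child `i` (junk value `π` if there is none). -/
open Classical in
noncomputable def subtree (π : InfProof) (i : Bool) : InfProof :=
  if h : ∃ τ : InfProof, τ.lab = shift i π.lab then h.choose else π

/-- `IsFOp E F` : `F` is the operator ℱ (relative to the one-step cut-elimination map
`E` = ℰ*) defined by: on proofs with cut-free main fragment it commutes with the last
rule, applying `U` at right premises of (□) and fixing single-node proofs; on other
proofs it first applies `E`. -/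
def IsFOp (E : InfProof → InfProof) (F : (InfProof → InfProof) → InfProof → InfProof) : Prop :=
  ∀ (U : InfProof → InfProof) (π : InfProof),
    (MemP 1 π.lab → height π.lab = 0 → F U π = π) ∧
    (∀ (r : Rule) (s : Sequent), MemP 1 π.lab → π.lab [] = some (r, s) →
        r ≠ Rule.box → r ≠ Rule.cut → height π.lab ≠ 0 →
        (F U π).lab [] = some (r, s) ∧
        shift false (F U π).lab = (F U (subtree π false)).lab ∧
        (r = Rule.impL → shift true (F U π).lab = (F U (subtree π true)).lab)) ∧
    (∀ s : Sequent, MemP 1 π.lab → π.lab [] = some (Rule.box, s) →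
        (F U π).lab [] = some (Rule.box, s) ∧
        shift false (F U π).lab = (F U (subtree π false)).lab ∧
        shift true (F U π).lab = (U (subtree π true)).lab) ∧
    (¬ MemP 1 π.lab → F U π = F U (E π))

/-- Membership in 𝒩ₙ : a root-preserving nonexpansive map whose image lies in 𝒫ₙ. -/
def InN (n : ℕ) (U : InfProof → InfProof) : Prop :=
  Nonexpansive U ∧ RootPres U ∧ ∀ π : InfProof, MemP n (U π).lab

/-- The finitary sequent calculus Grz_Seq (with cut allowed iff the flag is `true`). -/
inductive GrzSeq : Bool → Sequent → Prop
  | ax (c : Bool) (Γ Δ : Multiset Formula) (A : Formula) :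
      GrzSeq c (A ::ₘ Γ, A ::ₘ Δ)
  | bot (c : Bool) (Γ Δ : Multiset Formula) :
      GrzSeq c (Formula.bot ::ₘ Γ, Δ)
  | impL (c : Bool) (Γ Δ : Multiset Formula) (A B : Formula) :
      GrzSeq c (B ::ₘ Γ, Δ) → GrzSeq c (Γ, A ::ₘ Δ) →
      GrzSeq c (Formula.imp A B ::ₘ Γ, Δ)
  | impR (c : Bool) (Γ Δ : Multiset Formula) (A B : Formula) :
      GrzSeq c (A ::ₘ Γ, B ::ₘ Δ) → GrzSeq c (Γ, Formula.imp A B ::ₘ Δ)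
  | refl (c : Bool) (Γ Δ : Multiset Formula) (B : Formula) :
      GrzSeq c (B ::ₘ Formula.box B ::ₘ Γ, Δ) → GrzSeq c (Formula.box B ::ₘ Γ, Δ)
  | grz (c : Bool) (Γ Δ : Multiset Formula) (A : Formula) (P : Multiset Formula) :
      GrzSeq c (Formula.box (Formula.imp A (Formula.box A)) ::ₘ boxed P, {A}) →
      GrzSeq c (Γ + boxed P, Formula.box A ::ₘ Δ)
  | cut (Γ Δ : Multiset Formula) (A : Formula) :
      GrzSeq true (Γ, A ::ₘ Δ) → GrzSeq true (A ::ₘ Γ, Δ) → GrzSeq true (Γ, Δ)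

/-!
ℱ(𝒰) copies the cut-free main fragment of a proof in 𝒫₁ (of ℰ*(π) when π ∉ 𝒫₁) and calls 𝒰
only at right premises of (□). So one level of 𝒫ₙ is gained across each such premise, and for
∼ₙ the map 𝒰 is only needed to preserve ∼ₙ₋₁ there.

Instead of invoking Banach's theorem, the fixed point is written down: its labelling `fixLab`
applies `toP1 E` afresh at every node. Main fragments have finite height (König's lemma), so every
branch of it still crosses right premises of (□) infinitely often, and ℱ(ℰ) = ℰ holds literally.
Then ℰ ∈ 𝒩ₙ for all n by induction, and a cut at an address with k right turns would contradict
membership in 𝒫ₖ₊₁.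
-/

def Rule.arity : Rule → ℕ
  | .ax | .axBot => 0
  | .impR | .refl => 1
  | .impL | .box | .cut => 2

theorem Inst.isSome_premises_iff {r : Rule} {s : Sequent} {p q : Option Sequent}
    (h : Inst r s p q) : (p.isSome ↔ 0 < r.arity) ∧ (q.isSome ↔ 1 < r.arity) := by
  cases h <;> simp [Rule.arity]

namespace InfProof

theorem lab_injective : Function.Injective InfProof.lab := by
  rintro ⟨l, _, _, _, _⟩ ⟨m, _, _, _, _⟩ (rfl : l = m)
  rfl

theorem exists_lab_nil (π : InfProof) : ∃ r s, π.lab [] = some (r, s) := by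
  obtain ⟨⟨r, s⟩, h⟩ := Option.isSome_iff_exists.mp π.root_some
  exact ⟨r, s, h⟩

theorem isSome_lab_singleton_iff (π : InfProof) {r : Rule} {s : Sequent}
    (h : π.lab [] = some (r, s)) (i : Bool) : (π.lab [i]).isSome ↔ i.toNat < r.arity := by
  have := (π.step [] r s h).isSome_premises_iff
  cases i
  · simpa using this.1
  · simpa using this.2

theorem isSome_lab_singleton (π : InfProof) {r : Rule} {s : Sequent}
    (h : π.lab [] = some (r, s)) (i : Bool) (hi : i.toNat < r.arity := by decide) :
    (π.lab [i]).isSome :=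
  (π.isSome_lab_singleton_iff h i).mpr hi

theorem lab_append_eq_none (π : InfProof) {x : List Bool} (h : π.lab x = none) :
    ∀ y, π.lab (x ++ y) = none := by
  intro y
  induction y using List.reverseRecOn with
  | nil => simpa using h
  | append_singleton y i ih => simpa using π.nojunk _ i ih

theorem isSome_of_append (π : InfProof) {x y : List Bool} (h : (π.lab (x ++ y)).isSome) :
    (π.lab x).isSome := by
  by_contra hx
  simp [π.lab_append_eq_none (Option.not_isSome_iff_eq_none.mp hx) y] at h

theorem shift_mem_range (π : InfProof) {i : Bool} (h : (π.lab [i]).isSome) :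
    shift i π.lab ∈ Set.range InfProof.lab := by
  refine ⟨⟨shift i π.lab, h, fun a => π.nojunk (i :: a), fun a => π.step (i :: a), ?_⟩, rfl⟩
  intro f hf N
  -- prepend `i` to the branch `f` to get a branch of `π`
  let g : ℕ → Bool := fun n => Nat.casesOn n i f
  have hg : ∀ n, (List.range (n + 1)).map g = i :: (List.range n).map f := by
    intro n
    simp [List.range_succ_eq_map, g]
  obtain ⟨_ | m, hm, hgm, hbox⟩ := π.branch g
    (fun | 0 => π.root_some | n + 1 => by rw [hg]; exact hf n) (N + 1)
  · omega
  · exact ⟨m, by omega, hgm, by rwa [hg] at hbox⟩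

end InfProof

theorem subtree_lab (π : InfProof) {i : Bool} (h : (π.lab [i]).isSome) :
    (subtree π i).lab = shift i π.lab := by
  have hex : ∃ τ : InfProof, τ.lab = shift i π.lab := π.shift_mem_range h
  rw [subtree, dif_pos hex]
  exact hex.choose_spec

def MainChild (l : Lab) (i : Bool) : Prop := (l []).map Prod.fst = some .box → i = false

theorem mainChild_false (l : Lab) : MainChild l false := fun _ => rfl

theorem mainChild_of_lab_nil {l : Lab} {r : Rule} {s : Sequent} (h : l [] = some (r, s))
    {i : Bool} (hr : ¬(r = .box ∧ i = true)) : MainChild l i := by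
  simp only [MainChild, h, Option.map_some, Option.some.injEq]
  rintro rfl
  simpa using hr

theorem inMain_singleton {l : Lab} {i : Bool} (h : (l [i]).isSome) : InMain l [i] := by
  refine ⟨h, fun b c hbc _ => ?_⟩
  rcases b with _ | ⟨_, b⟩
  · exact (List.cons.inj hbc).2.symm
  · simpa using congrArg List.length hbc

theorem InfProof.inMain_of_append (π : InfProof) {x y : List Bool} (h : InMain π.lab (x ++ y)) :
    InMain π.lab x :=
  ⟨π.isSome_of_append h.1, fun b c hbc hb =>
    (List.append_eq_nil_iff.mp (h.2 b (c ++ y) (by simp [hbc]) hb)).1⟩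

theorem inMain_cons_iff {l : Lab} {i : Bool} {a : List Bool} (hi : MainChild l i) :
    InMain l (i :: a) ↔ InMain (shift i l) a := by
  constructor
  · exact fun ⟨h1, h2⟩ => ⟨h1, fun b c hbc hb => h2 (i :: b) c (by simp [hbc]) hb⟩
  · rintro ⟨h1, h2⟩
    refine ⟨h1, fun b c hbc hb => ?_⟩
    rcases b with _ | ⟨j, b⟩
    · obtain ⟨rfl, -⟩ := List.cons.inj hbc
      exact absurd (hi hb) (by simp)
    · simp only [List.cons_append, List.cons.injEq] at hbc
      obtain ⟨rfl, hbc⟩ := hbc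
      exact h2 b c hbc hb

def mainLengths (l : Lab) : Set ℕ := {n | ∃ a : List Bool, InMain l a ∧ a.length = n}

def HasLongMainExtensions (l : Lab) (a : List Bool) : Prop :=
  ∀ n, ∃ b : List Bool, InMain l (a ++ b) ∧ n ≤ b.length

open Classical in
noncomputable def longStep (l : Lab) (a : List Bool) : Bool :=
  if HasLongMainExtensions l (a ++ [false]) then false else true

noncomputable def longPath (l : Lab) : ℕ → List Bool
  | 0 => []
  | n + 1 => longPath l n ++ [longStep l (longPath l n)]

theorem HasLongMainExtensions.append_longStep {l : Lab} {a : List Bool}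
    (h : HasLongMainExtensions l a) : HasLongMainExtensions l (a ++ [longStep l a]) := by
  unfold longStep
  split_ifs with h0
  · exact h0
  · by_contra h1
    simp only [HasLongMainExtensions, not_forall, not_exists, not_and, not_le] at h0 h1
    obtain ⟨n₀, hn₀⟩ := h0
    obtain ⟨n₁, hn₁⟩ := h1
    obtain ⟨_ | ⟨i, b⟩, hb, hlen⟩ := h (n₀ + n₁ + 1)
    · simp at hlen
    · have hb' : InMain l (a ++ [i] ++ b) := by simpa using hb
      cases i
      · have := hn₀ b hb'
        simp at hlen
        omega
      · have := hn₁ b hb'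
        simp at hlen
        omega

theorem longPath_eq_map_range (l : Lab) (n : ℕ) :
    longPath l n = (List.range n).map (fun k => longStep l (longPath l k)) := by
  induction n with
  | zero => rfl
  | succ n ih => rw [longPath, List.range_succ, List.map_append, ← ih]; rfl

/-- König's lemma: an unbounded main fragment would contain an infinite branch that never
passes through a right premise of (□). -/
theorem InfProof.bddAbove_mainLengths (π : InfProof) : BddAbove (mainLengths π.lab) := by
  by_contra hb
  have hlong : ∀ n, HasLongMainExtensions π.lab (longPath π.lab n) := by
    intro n
    induction n with
    | zero =>
      intro n
      obtain ⟨_, ⟨a, ha, rfl⟩, hlt⟩ := not_bddAbove_iff.mp hb n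
      exact ⟨a, by simpa [longPath] using ha, hlt.le⟩
    | succ n ih => exact ih.append_longStep
  set f : ℕ → Bool := fun k => longStep π.lab (longPath π.lab k)
  have hdef : ∀ n, (π.lab ((List.range n).map f)).isSome := by
    intro n
    obtain ⟨b, hb, -⟩ := hlong n 0
    rw [← longPath_eq_map_range]
    exact (π.inMain_of_append hb).1
  obtain ⟨n, -, hfn, hbox⟩ := π.branch f hdef 0
  obtain ⟨b, hb, hlen⟩ := hlong (n + 1) 1
  rw [← longPath_eq_map_range] at hbox
  have hb' : InMain π.lab (longPath π.lab n ++ true :: b) := by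
    simpa [longPath, ← hfn] using hb
  simp [hb'.2 _ b rfl hbox] at hlen

namespace InfProof

theorem one_le_height (π : InfProof) {i : Bool} (h : (π.lab [i]).isSome) :
    1 ≤ height π.lab :=
  le_csSup π.bddAbove_mainLengths ⟨[i], inMain_singleton h, rfl⟩

theorem height_eq_zero_iff (π : InfProof) : height π.lab = 0 ↔ ∀ i, π.lab [i] = none := by
  constructor
  · intro h0 i
    by_contra hi
    have := π.one_le_height (Option.ne_none_iff_isSome.mp hi)
    omega
  · intro hnone
    refine Nat.le_zero.mp (csSup_le' ?_)
    rintro _ ⟨_ | ⟨i, a⟩, ha, rfl⟩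
    · rfl
    · have := π.isSome_of_append (x := [i]) (y := a) ha.1
      simp [hnone i] at this

theorem height_shift_lt (π : InfProof) {i : Bool} (h : (π.lab [i]).isSome)
    (hi : MainChild π.lab i) :
    height (shift i π.lab) < height π.lab := by
  have hle : height (shift i π.lab) ≤ height π.lab - 1 := by
    refine csSup_le' ?_
    rintro _ ⟨a, ha, rfl⟩
    have : (i :: a).length ≤ height π.lab :=
      le_csSup π.bddAbove_mainLengths ⟨i :: a, (inMain_cons_iff hi).mpr ha, rfl⟩
    simp at this
    omega
  have := π.one_le_height h
  omega

end InfProof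

namespace MemP

theorem mono {n : ℕ} {l : Lab} (h : MemP n l) {m : ℕ} (hmn : m ≤ n) : MemP m l := by
  induction h generalizing m with
  | zero l => exact (Nat.le_zero.mp hmn) ▸ .zero l
  | leaf n l hh => exact .leaf m l hh
  | bin n l s hr _ _ ih₁ ih₂ => exact .bin m l s hr (ih₁ hmn) (ih₂ hmn)
  | un n l r s hr hroot _ ih => exact .un m l r s hr hroot (ih hmn)
  | box n l s hr _ _ ih₁ ih₂ =>
    match m with
    | 0 => exact .zero l
    | m + 1 => exact .box m l s hr (ih₁ hmn) (ih₂ (by omega))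

theorem lab_nil_ne_cut {k : ℕ} {π : InfProof} (h : MemP k π.lab) (hk : k ≠ 0) (s : Sequent) :
    π.lab [] ≠ some (.cut, s) := by
  intro hcut
  cases h with
  | zero => exact hk rfl
  | leaf _ _ hh =>
    simpa [π.height_eq_zero_iff.mp hh false] using π.isSome_lab_singleton hcut false
  | bin _ _ _ hr => simp [hcut] at hr
  | un _ _ _ _ hr hroot => rcases hr with rfl | rfl <;> simp [hcut] at hroot
  | box _ _ _ hr => simp [hcut] at hr

theorem shift_of_main {k : ℕ} {π : InfProof} (h : MemP k π.lab) {i : Bool}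
    (hi : (π.lab [i]).isSome) (hmain : MainChild π.lab i) : MemP k (shift i π.lab) := by
  cases h with
  | zero => exact .zero _
  | leaf _ _ hh => simp [π.height_eq_zero_iff.mp hh i] at hi
  | bin _ _ _ _ h₁ h₂ => cases i <;> assumption
  | un _ _ r _ hr hroot h₁ =>
    cases i
    · exact h₁
    · have := (π.isSome_lab_singleton_iff hroot true).mp hi
      rcases hr with rfl | rfl <;> simp [Rule.arity] at this
  | box _ _ _ hroot h₁ => exact (hmain (by simp [hroot])) ▸ h₁

theorem subtree_of_main {k : ℕ} {π : InfProof} (h : MemP k π.lab) {i : Bool}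
    (hi : (π.lab [i]).isSome) (hmain : MainChild π.lab i) : MemP k (subtree π i).lab :=
  subtree_lab π hi ▸ h.shift_of_main hi hmain

theorem shift_true_of_box {k : ℕ} {π : InfProof} (h : MemP k π.lab) {s : Sequent}
    (hroot : π.lab [] = some (.box, s)) : MemP (k - 1) (shift true π.lab) := by
  cases h with
  | zero => exact .zero _
  | leaf _ _ hh =>
    simpa [π.height_eq_zero_iff.mp hh true] using π.isSome_lab_singleton hroot true
  | bin _ _ _ hr => simp [hroot] at hr
  | un _ _ _ _ hr hr' => rcases hr with rfl | rfl <;> simp [hroot] at hr'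
  | box _ _ _ _ _ h₂ => simpa using h₂

end MemP

theorem InfProof.noCut_of_forall_memP (π : InfProof) (h : ∀ n, MemP n π.lab) : NoCut π := by
  suffices key : ∀ (a : List Bool) (π : InfProof), MemP (a.count true + 1) π.lab →
      ∀ s, π.lab a ≠ some (.cut, s) by
    rintro a _ s hs rfl
    exact key a π (h _) s hs
  intro a
  induction a with
  | nil => exact fun π hπ => hπ.lab_nil_ne_cut one_ne_zero
  | cons i a ih =>
    intro π hπ s hcut
    have hi : (π.lab [i]).isSome := π.isSome_of_append (x := [i]) (y := a) (by simp [hcut])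
    obtain ⟨r, s₀, hroot⟩ := π.exists_lab_nil
    have hsub := subtree_lab π hi
    refine ih (subtree π i) ?_ s (by rw [hsub]; exact hcut)
    rw [hsub]
    -- passing through the right premise of (□) costs one level of 𝒫ₙ, any other step none
    by_cases hbox : r = .box ∧ i = true
    · obtain ⟨rfl, rfl⟩ := hbox
      simpa using hπ.shift_true_of_box hroot
    · exact (hπ.shift_of_main hi (mainChild_of_lab_nil hroot hbox)).mono (by cases i <;> simp)

namespace Sim

theorem symm {n : ℕ} {l m : Lab} (h : Sim n l m) : Sim n m l := by
  induction h with
  | zero l m => exact .zero m l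
  | leaf n l h => exact .leaf n l h
  | bin n l m r s hr h₁ h₂ e₁ e₂ _ _ ih₁ ih₂ =>
    exact .bin n m l r s hr h₂ h₁ e₁.symm e₂.symm ih₁ ih₂
  | un n l m r s hr h₁ h₂ e₁ _ ih => exact .un n m l r s hr h₂ h₁ e₁.symm ih
  | box n l m s h₁ h₂ e₁ e₂ _ _ ih₁ ih₂ => exact .box n m l s h₂ h₁ e₁.symm e₂.symm ih₁ ih₂

theorem memP_one {n : ℕ} {π τ : InfProof} (h : Sim n π.lab τ.lab) (hn : n ≠ 0)
    (hπ : MemP 1 π.lab) : MemP 1 τ.lab := by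
  generalize hl : π.lab = l at h hπ
  generalize hm : τ.lab = m at h
  induction h generalizing π τ with
  | zero => exact absurd rfl hn
  | leaf => exact hm ▸ hπ
  | bin n l m r s hr hl₀ hm₀ _ _ _ _ ih₁ ih₂ =>
    subst hl hm
    rcases hr with rfl | rfl
    · exact .bin 1 _ s hm₀
        (ih₁ hn (subtree_lab π (π.isSome_lab_singleton hl₀ false))
          (hπ.shift_of_main (π.isSome_lab_singleton hl₀ false) (mainChild_false _))
          (subtree_lab τ (τ.isSome_lab_singleton hm₀ false)))
        (ih₂ hn (subtree_lab π (π.isSome_lab_singleton hl₀ true))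
          (hπ.shift_of_main (π.isSome_lab_singleton hl₀ true) (mainChild_of_lab_nil hl₀ (by simp)))
          (subtree_lab τ (τ.isSome_lab_singleton hm₀ true)))
    · exact absurd hl₀ (hπ.lab_nil_ne_cut one_ne_zero s)
  | un n l m r s hr hl₀ hm₀ _ _ ih =>
    subst hl hm
    have child : ∀ ρ : InfProof, ρ.lab [] = some (r, s) → (ρ.lab [false]).isSome :=
      fun ρ h => ρ.isSome_lab_singleton h false (by rcases hr with rfl | rfl <;> decide)
    exact .un 1 _ r s hr hm₀ (ih hn (subtree_lab π (child π hl₀))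
      (hπ.shift_of_main (child π hl₀) (mainChild_false _)) (subtree_lab τ (child τ hm₀)))
  | box n l m s hl₀ hm₀ _ _ _ _ ih =>
    subst hl hm
    exact .box 0 _ s hm₀ (ih n.succ_ne_zero (subtree_lab π (π.isSome_lab_singleton hl₀ false))
      (hπ.shift_of_main (π.isSome_lab_singleton hl₀ false) (mainChild_false _))
      (subtree_lab τ (τ.isSome_lab_singleton hm₀ false))) (.zero _)

end Sim

theorem RootPres.map_snd_lab_nil {f : InfProof → InfProof} (hf : RootPres f) (π : InfProof) :
    ((f π).lab []).map Prod.snd = (π.lab []).map Prod.snd := by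
  obtain ⟨r, s, h⟩ := π.exists_lab_nil
  obtain ⟨r', h'⟩ := hf π s ⟨r, h⟩
  rw [h, h']
  rfl

namespace IsFOp

variable {E : InfProof → InfProof} {F : (InfProof → InfProof) → InfProof → InfProof}
  {U : InfProof → InfProof}

theorem lab_nil (hF : IsFOp E F) {π : InfProof} (hπ : MemP 1 π.lab) :
    (F U π).lab [] = π.lab [] := by
  obtain ⟨r, s, hroot⟩ := π.exists_lab_nil
  by_cases h0 : height π.lab = 0
  · rw [(hF U π).1 hπ h0]
  by_cases hbox : r = .box
  · subst hbox
    rw [((hF U π).2.2.1 s hπ hroot).1, hroot]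
  · have hcut : r ≠ .cut := by rintro rfl; exact hπ.lab_nil_ne_cut one_ne_zero s hroot
    rw [((hF U π).2.1 r s hπ hroot hbox hcut h0).1, hroot]

theorem shift_lab_of_main (hF : IsFOp E F) {π : InfProof} (hπ : MemP 1 π.lab) {i : Bool}
    (hi : (π.lab [i]).isSome) (hmain : MainChild π.lab i) :
    shift i (F U π).lab = (F U (subtree π i)).lab := by
  obtain ⟨r, s, hroot⟩ := π.exists_lab_nil
  have h0 : height π.lab ≠ 0 := Nat.one_le_iff_ne_zero.mp (π.one_le_height hi)
  by_cases hbox : r = .box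
  · subst hbox
    obtain rfl : i = false := hmain (by simp [hroot])
    exact ((hF U π).2.2.1 s hπ hroot).2.1
  have hcut : r ≠ .cut := by rintro rfl; exact hπ.lab_nil_ne_cut one_ne_zero s hroot
  obtain ⟨-, hfalse, htrue⟩ := (hF U π).2.1 r s hπ hroot hbox hcut h0
  cases i
  · exact hfalse
  · apply htrue
    have := (π.isSome_lab_singleton_iff hroot true).mp hi
    cases r <;> simp [Rule.arity] at this hbox hcut ⊢

theorem lab_singleton_eq_none (hF : IsFOp E F) {π : InfProof} (hπ : MemP 1 π.lab) {i : Bool}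
    (hi : π.lab [i] = none) : (F U π).lab [i] = none := by
  obtain ⟨r, s, hroot⟩ := π.exists_lab_nil
  rw [← Option.not_isSome_iff_eq_none,
    (F U π).isSome_lab_singleton_iff ((hF.lab_nil hπ).trans hroot) i,
    ← π.isSome_lab_singleton_iff hroot i, hi]
  simp

theorem map_snd_lab_singleton (hF : IsFOp E F) (hU : RootPres U) {π : InfProof}
    (hπ : MemP 1 π.lab) (i : Bool) :
    ((F U π).lab [i]).map Prod.snd = (π.lab [i]).map Prod.snd := by
  rcases hi : π.lab [i] with _ | ⟨r, s⟩
  · rw [hF.lab_singleton_eq_none hπ hi]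
  have hi' : (π.lab [i]).isSome := by simp [hi]
  rw [← hi, ← show shift i π.lab [] = π.lab [i] from rfl, ← subtree_lab π hi',
    ← show shift i (F U π).lab [] = (F U π).lab [i] from rfl]
  obtain ⟨r₀, s₀, hroot⟩ := π.exists_lab_nil
  by_cases hbox : r₀ = .box ∧ i = true
  · obtain ⟨rfl, rfl⟩ := hbox
    rw [((hF U π).2.2.1 s₀ hπ hroot).2.2, hU.map_snd_lab_nil]
  · have hmain := mainChild_of_lab_nil hroot hbox
    rw [hF.shift_lab_of_main hπ hi' hmain, hF.lab_nil (hπ.subtree_of_main hi' hmain)]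

theorem memP_succ_of_memP_one (hF : IsFOp E F) {n : ℕ} (hU : ∀ ρ, MemP n (U ρ).lab)
    {π : InfProof} (hπ : MemP 1 π.lab) : MemP (n + 1) (F U π).lab := by
  generalize hl : π.lab = l at hπ
  generalize hk : 1 = k at hπ
  induction hπ generalizing π with
  | zero => omega
  | leaf k l hh =>
    subst hl hk
    rw [(hF U π).1 (.leaf 1 _ hh) hh]
    exact .leaf _ _ hh
  | bin k l s hroot h₁ h₂ ih₁ ih₂ =>
    subst hl hk
    have hπ : MemP 1 π.lab := .bin 1 _ s hroot h₁ h₂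
    have hf := π.isSome_lab_singleton hroot false
    have ht := π.isSome_lab_singleton hroot true
    refine .bin (n + 1) _ s ((hF.lab_nil hπ).trans hroot) ?_ ?_
    · rw [hF.shift_lab_of_main hπ hf (mainChild_false _)]
      exact ih₁ (subtree_lab π hf) rfl
    · rw [hF.shift_lab_of_main hπ ht (mainChild_of_lab_nil hroot (by simp))]
      exact ih₂ (subtree_lab π ht) rfl
  | un k l r s hr hroot h₁ ih =>
    subst hl hk
    have hπ : MemP 1 π.lab := .un 1 _ r s hr hroot h₁
    have hf := π.isSome_lab_singleton hroot false (by rcases hr with rfl | rfl <;> decide)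
    refine .un (n + 1) _ r s hr ((hF.lab_nil hπ).trans hroot) ?_
    rw [hF.shift_lab_of_main hπ hf (mainChild_false _)]
    exact ih (subtree_lab π hf) rfl
  | box k l s hroot h₁ h₂ ih =>
    subst hl
    obtain rfl : k = 0 := by omega
    have hπ : MemP 1 π.lab := .box 0 _ s hroot h₁ h₂
    have hf := π.isSome_lab_singleton hroot false
    obtain ⟨hroot', -, hright⟩ := (hF U π).2.2.1 s hπ hroot
    refine .box n _ s hroot' ?_ (hright ▸ hU _)
    rw [hF.shift_lab_of_main hπ hf (mainChild_false _)]
    exact ih (subtree_lab π hf) rfl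

theorem sim_shift_of_main (hF : IsFOp E F) {n : ℕ} {π τ : InfProof} (hπ : MemP 1 π.lab)
    (hτ : MemP 1 τ.lab) {i : Bool} (hπi : (π.lab [i]).isSome) (hτi : (τ.lab [i]).isSome)
    (hπm : MainChild π.lab i) (hτm : MainChild τ.lab i)
    (ih : (subtree π i).lab = shift i π.lab → MemP 1 (shift i π.lab) →
      (subtree τ i).lab = shift i τ.lab → MemP 1 (shift i τ.lab) →
      Sim n (F U (subtree π i)).lab (F U (subtree τ i)).lab) :
    Sim n (shift i (F U π).lab) (shift i (F U τ).lab) := by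
  rw [hF.shift_lab_of_main hπ hπi hπm, hF.shift_lab_of_main hτ hτi hτm]
  exact ih (subtree_lab π hπi) (hπ.shift_of_main hπi hπm) (subtree_lab τ hτi)
    (hτ.shift_of_main hτi hτm)

theorem sim_of_memP_one (hF : IsFOp E F) (hUr : RootPres U) {n : ℕ}
    (hU : ∀ k < n, ∀ ρ σ : InfProof, Sim k ρ.lab σ.lab → Sim k (U ρ).lab (U σ).lab)
    {π τ : InfProof} (h : Sim n π.lab τ.lab) (hπ : MemP 1 π.lab) (hτ : MemP 1 τ.lab) :
    Sim n (F U π).lab (F U τ).lab := by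
  generalize hl : π.lab = l at h hπ
  generalize hm : τ.lab = m at h hτ
  induction h generalizing π τ with
  | zero => exact .zero _ _
  | leaf n l hh =>
    obtain rfl : π = τ := InfProof.lab_injective (hl.trans hm.symm)
    subst hl
    rw [(hF U π).1 hπ hh]
    exact .leaf n _ hh
  | bin n l m r s hr hl₀ hm₀ e₁ e₂ _ _ ih₁ ih₂ =>
    subst hl hm
    obtain rfl : r = .impL := hr.resolve_right fun hcut =>
      hπ.lab_nil_ne_cut one_ne_zero s (hcut ▸ hl₀)
    refine .bin n _ _ .impL s (.inl rfl) ((hF.lab_nil hπ).trans hl₀) ((hF.lab_nil hτ).trans hm₀)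
      (by rwa [hF.map_snd_lab_singleton hUr hπ, hF.map_snd_lab_singleton hUr hτ])
      (by rwa [hF.map_snd_lab_singleton hUr hπ, hF.map_snd_lab_singleton hUr hτ])
      (hF.sim_shift_of_main hπ hτ (π.isSome_lab_singleton hl₀ false)
        (τ.isSome_lab_singleton hm₀ false) (mainChild_false _) (mainChild_false _) (ih₁ hU))
      (hF.sim_shift_of_main hπ hτ (π.isSome_lab_singleton hl₀ true)
        (τ.isSome_lab_singleton hm₀ true) (mainChild_of_lab_nil hl₀ (by simp))
        (mainChild_of_lab_nil hm₀ (by simp)) (ih₂ hU))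
  | un n l m r s hr hl₀ hm₀ e₁ _ ih =>
    subst hl hm
    have harity : Bool.toNat false < r.arity := by rcases hr with rfl | rfl <;> decide
    refine .un n _ _ r s hr ((hF.lab_nil hπ).trans hl₀) ((hF.lab_nil hτ).trans hm₀)
      (by rwa [hF.map_snd_lab_singleton hUr hπ, hF.map_snd_lab_singleton hUr hτ])
      (hF.sim_shift_of_main hπ hτ (π.isSome_lab_singleton hl₀ false harity)
        (τ.isSome_lab_singleton hm₀ false harity) (mainChild_false _) (mainChild_false _) (ih hU))
  | box n l m s hl₀ hm₀ e₁ e₂ _ h₂ ih =>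
    subst hl hm
    obtain ⟨hπ₀, -, hπ₁⟩ := (hF U π).2.2.1 s hπ hl₀
    obtain ⟨hτ₀, -, hτ₁⟩ := (hF U τ).2.2.1 s hτ hm₀
    refine .box n _ _ s hπ₀ hτ₀
      (by rwa [hF.map_snd_lab_singleton hUr hπ, hF.map_snd_lab_singleton hUr hτ])
      (by rwa [hF.map_snd_lab_singleton hUr hπ, hF.map_snd_lab_singleton hUr hτ])
      (hF.sim_shift_of_main hπ hτ (π.isSome_lab_singleton hl₀ false)
        (τ.isSome_lab_singleton hm₀ false) (mainChild_false _) (mainChild_false _) (ih hU)) ?_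
    rw [hπ₁, hτ₁]
    refine hU n n.lt_succ_self _ _ ?_
    rwa [subtree_lab π (π.isSome_lab_singleton hl₀ true),
      subtree_lab τ (τ.isSome_lab_singleton hm₀ true)]

theorem sim (hF : IsFOp E F) (hEN : Nonexpansive E) (hE₁ : ∀ π, MemP 1 (E π).lab)
    (hUr : RootPres U) {n : ℕ}
    (hU : ∀ k < n, ∀ ρ σ : InfProof, Sim k ρ.lab σ.lab → Sim k (U ρ).lab (U σ).lab)
    {π τ : InfProof} (h : Sim n π.lab τ.lab) : Sim n (F U π).lab (F U τ).lab := by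
  rcases Nat.eq_zero_or_pos n with rfl | hn
  · exact .zero _ _
  by_cases hπ : MemP 1 π.lab
  · exact hF.sim_of_memP_one hUr hU h hπ (h.memP_one hn.ne' hπ)
  · have hτ : ¬ MemP 1 τ.lab := fun hτ => hπ (h.symm.memP_one hn.ne' hτ)
    rw [(hF U π).2.2.2 hπ, (hF U τ).2.2.2 hτ]
    exact hF.sim_of_memP_one hUr hU (hEN n π τ h) (hE₁ π) (hE₁ τ)

theorem rootPres (hF : IsFOp E F) (hER : RootPres E) (hE₁ : ∀ π, MemP 1 (E π).lab)
    (U : InfProof → InfProof) : RootPres (F U) := by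
  intro π S hS
  by_cases hπ : MemP 1 π.lab
  · rwa [Proves, hF.lab_nil hπ]
  · rw [(hF U π).2.2.2 hπ, Proves, hF.lab_nil (hE₁ π)]
    exact hER π S hS

theorem inN_succ (hF : IsFOp E F)
    (hE : Nonexpansive E ∧ RootPres E ∧ ∀ π : InfProof, MemP 1 (E π).lab) {n : ℕ}
    (hU : InN n U) : InN (n + 1) (F U) := by
  obtain ⟨hEN, hER, hE₁⟩ := hE
  obtain ⟨hUn, hUr, hUmem⟩ := hU
  refine ⟨fun _ _ _ h => hF.sim hEN hE₁ hUr (fun j _ => hUn j) h, hF.rootPres hER hE₁ U,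
    fun π => ?_⟩
  by_cases hπ : MemP 1 π.lab
  · exact hF.memP_succ_of_memP_one hUmem hπ
  · rw [(hF U π).2.2.2 hπ]
    exact hF.memP_succ_of_memP_one hUmem (hE₁ π)

end IsFOp

section FixedPoint

variable {E : InfProof → InfProof}

open Classical in
noncomputable def toP1 (E : InfProof → InfProof) (π : InfProof) : InfProof :=
  if MemP 1 π.lab then π else E π

theorem toP1_of_memP_one {π : InfProof} (h : MemP 1 π.lab) : toP1 E π = π := if_pos h

theorem toP1_of_not_memP_one {π : InfProof} (h : ¬ MemP 1 π.lab) : toP1 E π = E π :=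
  if_neg h

theorem memP_one_toP1 (hE₁ : ∀ π, MemP 1 (E π).lab) (π : InfProof) :
    MemP 1 (toP1 E π).lab := by
  unfold toP1
  split_ifs with h
  exacts [h, hE₁ π]

theorem rootPres_toP1 (hER : RootPres E) : RootPres (toP1 E) := by
  intro π S hS
  unfold toP1
  split_ifs
  exacts [hS, hER π S hS]

noncomputable def fixLab (E : InfProof → InfProof) : InfProof → Lab
  | π, [] => (toP1 E π).lab []
  | π, i :: a =>
    if ((toP1 E π).lab [i]).isSome then fixLab E (subtree (toP1 E π) i) a else none

theorem fixLab_cons (π : InfProof) (i : Bool) (a : List Bool) :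
    fixLab E π (i :: a) =
      if ((toP1 E π).lab [i]).isSome then fixLab E (subtree (toP1 E π) i) a
      else none := rfl

theorem fixLab_toP1 (hE₁ : ∀ π, MemP 1 (E π).lab) (π : InfProof) :
    fixLab E (toP1 E π) = fixLab E π := by
  have h : toP1 E (toP1 E π) = toP1 E π := toP1_of_memP_one (memP_one_toP1 hE₁ π)
  funext a
  cases a with
  | nil => exact congrArg (·.lab []) h
  | cons i a => rw [fixLab_cons, fixLab_cons, h]

theorem map_snd_fixLab_singleton (hER : RootPres E) (π : InfProof) (i : Bool) :
    (fixLab E π [i]).map Prod.snd = ((toP1 E π).lab [i]).map Prod.snd := by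
  rw [fixLab_cons]
  split_ifs with h
  · rw [fixLab, (rootPres_toP1 hER).map_snd_lab_nil, subtree_lab _ h]
    rfl
  · rw [Option.not_isSome_iff_eq_none.mp h]

theorem fixLab_root_isSome (π : InfProof) : (fixLab E π []).isSome := (toP1 E π).root_some

theorem fixLab_append_eq_none (π : InfProof) (a : List Bool) (i : Bool)
    (h : fixLab E π a = none) : fixLab E π (a ++ [i]) = none := by
  induction a generalizing π with
  | nil => simp [fixLab_root_isSome π |> Option.isSome_iff_ne_none.mp] at h
  | cons j a ih =>
    rw [List.cons_append, fixLab_cons]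
    rw [fixLab_cons] at h
    split_ifs at h ⊢
    exacts [ih _ h, rfl]

theorem fixLab_step (hER : RootPres E) (π : InfProof) (a : List Bool) {r : Rule} {s : Sequent}
    (h : fixLab E π a = some (r, s)) :
    Inst r s ((fixLab E π (a ++ [false])).map Prod.snd)
      ((fixLab E π (a ++ [true])).map Prod.snd) := by
  induction a generalizing π with
  | nil =>
    simp only [List.nil_append, map_snd_fixLab_singleton hER]
    exact (toP1 E π).step [] r s h
  | cons j a ih =>
    simp only [List.cons_append, fixLab_cons] at h ⊢
    split_ifs at h ⊢
    exact ih _ h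

theorem exists_fixLab_append (π : InfProof) (x : List Bool) (h : (fixLab E π x).isSome) :
    ∃ τ : InfProof, ∀ a, fixLab E π (x ++ a) = fixLab E τ a := by
  induction x generalizing π with
  | nil => exact ⟨π, fun a => rfl⟩
  | cons j x ih =>
    rw [fixLab_cons] at h
    split_ifs at h with hj
    · obtain ⟨τ, hτ⟩ := ih _ h
      exact ⟨τ, fun a => by rw [List.cons_append, fixLab_cons, if_pos hj, hτ]⟩
    · simp at h

theorem exists_box_right_of_fixLab (hE₁ : ∀ π, MemP 1 (E π).lab) (π : InfProof) (f : ℕ → Bool)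
    (hf : ∀ n, (fixLab E π ((List.range n).map f)).isSome) :
    ∃ n, f n = true ∧ (fixLab E π ((List.range n).map f)).map Prod.fst = some .box := by
  -- induction on the local height: every step that is not a right premise of (□) lowers it
  induction hh : height (toP1 E π).lab using Nat.strong_induction_on generalizing π f with
  | _ h ih =>
  have hcons : ∀ n, (List.range (n + 1)).map f = f 0 :: (List.range n).map (fun k => f (k + 1)) :=
    fun n => by simp [List.range_succ_eq_map]
  have hchild : ((toP1 E π).lab [f 0]).isSome := by
    have := hf 1
    rw [hcons, fixLab_cons] at this
    split_ifs at this with hc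
    · exact hc
    · simp at this
  obtain ⟨r, s, hroot⟩ := (toP1 E π).exists_lab_nil
  by_cases hbox : r = .box ∧ f 0 = true
  · exact ⟨0, hbox.2, by simp [fixLab, hroot, hbox.1]⟩
  have hmain := mainChild_of_lab_nil hroot hbox
  set τ := subtree (toP1 E π) (f 0)
  have hτ : toP1 E τ = τ := toP1_of_memP_one ((memP_one_toP1 hE₁ π).subtree_of_main hchild hmain)
  have hlt : height (toP1 E τ).lab < h := by
    rw [hτ, subtree_lab _ hchild, ← hh]
    exact (toP1 E π).height_shift_lt hchild hmain
  have hprefix : ∀ n, fixLab E π ((List.range (n + 1)).map f) =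
      fixLab E τ ((List.range n).map (fun k => f (k + 1))) :=
    fun n => by rw [hcons, fixLab_cons, if_pos hchild]
  obtain ⟨n, hn, hbox'⟩ := ih _ hlt τ _ (fun n => hprefix n ▸ hf (n + 1)) rfl
  exact ⟨n + 1, hn, by rwa [hprefix]⟩

theorem fixLab_branch (hE₁ : ∀ π, MemP 1 (E π).lab) (π : InfProof) (f : ℕ → Bool)
    (hf : ∀ n, (fixLab E π ((List.range n).map f)).isSome) (N : ℕ) :
    ∃ n, N ≤ n ∧ f n = true ∧ (fixLab E π ((List.range n).map f)).map Prod.fst = some .box := by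
  obtain ⟨τ, hτ⟩ := exists_fixLab_append π _ (hf N)
  have hsplit : ∀ k, (List.range (N + k)).map f =
      (List.range N).map f ++ (List.range k).map (fun j => f (N + j)) :=
    fun k => by simp [List.range_add]
  obtain ⟨n, hn, hbox⟩ := exists_box_right_of_fixLab hE₁ τ (fun j => f (N + j))
    (fun k => by rw [← hτ, ← hsplit]; exact hf (N + k))
  exact ⟨N + n, by omega, hn, by rwa [hsplit, hτ]⟩

noncomputable def fixOp (E : InfProof → InfProof) (hER : RootPres E)
    (hE₁ : ∀ π, MemP 1 (E π).lab) (π : InfProof) : InfProof where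
  lab := fixLab E π
  root_some := fixLab_root_isSome π
  nojunk := fixLab_append_eq_none π
  step a _ _ := fixLab_step hER π a
  branch := fixLab_branch hE₁ π

theorem rootPres_fixOp (hER : RootPres E) (hE₁ : ∀ π, MemP 1 (E π).lab) :
    RootPres (fixOp E hER hE₁) :=
  rootPres_toP1 hER

end FixedPoint

namespace IsFOp

variable {E : InfProof → InfProof} {F : (InfProof → InfProof) → InfProof → InfProof}

theorem lab_fixOp (hF : IsFOp E F) (hER : RootPres E) (hE₁ : ∀ π, MemP 1 (E π).lab)
    (a : List Bool) {π : InfProof} (hπ : MemP 1 π.lab) :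
    (F (fixOp E hER hE₁) π).lab a = fixLab E π a := by
  induction a generalizing π with
  | nil => rw [hF.lab_nil hπ, fixLab, toP1_of_memP_one hπ]
  | cons i a ih =>
    rw [fixLab_cons, toP1_of_memP_one hπ]
    split_ifs with hi
    · obtain ⟨r, s, hroot⟩ := π.exists_lab_nil
      by_cases hbox : r = .box ∧ i = true
      · obtain ⟨rfl, rfl⟩ := hbox
        exact congrFun ((hF _ π).2.2.1 s hπ hroot).2.2 a
      · have hmain := mainChild_of_lab_nil hroot hbox
        rw [← ih (hπ.subtree_of_main hi hmain)]
        exact congrFun (hF.shift_lab_of_main hπ hi hmain) a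
    · exact (F _ π).lab_append_eq_none
        (hF.lab_singleton_eq_none hπ (Option.not_isSome_iff_eq_none.mp hi)) a

theorem fixOp_eq (hF : IsFOp E F) (hER : RootPres E) (hE₁ : ∀ π, MemP 1 (E π).lab) :
    F (fixOp E hER hE₁) = fixOp E hER hE₁ := by
  funext π
  refine InfProof.lab_injective (funext fun a => ?_)
  by_cases hπ : MemP 1 π.lab
  · exact hF.lab_fixOp hER hE₁ a hπ
  · rw [(hF _ π).2.2.2 hπ, hF.lab_fixOp hER hE₁ a (hE₁ π), ← toP1_of_not_memP_one (E := E) hπ,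
      fixLab_toP1 hE₁]
    rfl

theorem nonexpansive_fixOp (hF : IsFOp E F) (hEN : Nonexpansive E) (hER : RootPres E)
    (hE₁ : ∀ π, MemP 1 (E π).lab) : Nonexpansive (fixOp E hER hE₁) := by
  intro n
  induction n using Nat.strong_induction_on with
  | _ n ih =>
  intro π τ h
  have := hF.sim hEN hE₁ (rootPres_fixOp hER hE₁) ih h
  rwa [hF.fixOp_eq] at this

end IsFOp

/-- 𝒰 ∈ 𝒩ₙ implies ℱ(𝒰) ∈ 𝒩ₙ₊₁; consequently the fixed point ℰ of ℱ
belongs to every 𝒩ₙ, i.e. it maps every ∞-proof of Grz∞ + cut to a cut-free ∞-proof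
of the same sequent. -/
theorem F_raises_and_fixed_point (E : InfProof → InfProof)
    (hE : Nonexpansive E ∧ RootPres E ∧ ∀ π : InfProof, MemP 1 (E π).lab)
    (F : (InfProof → InfProof) → InfProof → InfProof) (hF : IsFOp E F) :
    (∀ (n : ℕ) (U : InfProof → InfProof), InN n U → InN (n + 1) (F U)) ∧
    ∃ Eop : InfProof → InfProof, Nonexpansive Eop ∧ RootPres Eop ∧ F Eop = Eop ∧
      (∀ n : ℕ, InN n Eop) ∧
      ∀ (π : InfProof) (S : Sequent), Proves π S → NoCut (Eop π) ∧ Proves (Eop π) S := by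
  obtain ⟨hEN, hER, hE₁⟩ := hE
  have hfix := hF.fixOp_eq hER hE₁
  have hInN : ∀ n, InN n (fixOp E hER hE₁) := by
    intro n
    induction n with
    | zero => exact ⟨hF.nonexpansive_fixOp hEN hER hE₁, rootPres_fixOp hER hE₁, fun _ => .zero _⟩
    | succ n ih => exact hfix ▸ hF.inN_succ ⟨hEN, hER, hE₁⟩ ih
  refine ⟨fun _ _ => hF.inN_succ ⟨hEN, hER, hE₁⟩, fixOp E hER hE₁, (hInN 0).1, (hInN 0).2.1,
    hfix, hInN, fun π S hS => ⟨?_, (hInN 0).2.1 π S hS⟩⟩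
  exact (fixOp E hER hE₁ π).noCut_of_forall_memP fun n => (hInN n).2.2 π
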